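/- Let X be a Hausdorff topological space, T : X → X continuous, E an eventual family of subsets of ℕ, and (x_n) a sequence in X that follows T with respect to E (for every S ∈ E there exist p, q ∈ S with x_p = T(x_q)). If y is an accumulation point of (x_n) with respect to E (every open neighborhood U of y has {n : x_n ∈ U} ∈ E), then T(y) = y. -/

import Mathlib

open Set

theorem Continuous.exists_isOpen_disjoint_image_of_ne {X : Type*} [TopologicalSpace X]
    [T2Space X] {f : X → X} (hf : Continuous f) {y : X} (hy : f y ≠ y) :
    ∃ W : Set X, IsOpen W ∧ y ∈ W ∧ Disjoint W (f '' W) := by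
  obtain ⟨U, V, hU, hV, hfyU, hyV, hUV⟩ := t2_separation hy
  refine ⟨V ∩ f ⁻¹' U, hV.inter (hU.preimage hf), ⟨hyV, hfyU⟩, ?_⟩
  rw [image_inter_preimage]
  exact hUV.symm.mono inter_subset_left inter_subset_right

theorem follows_acc_isFixedPt_general {X : Type*} [TopologicalSpace X] [T2Space X]
    (T : X → X) (hT : Continuous T) (E : Set (Set ℕ))
    (x : ℕ → X)
    (hfollow : ∀ S ∈ E, ∃ p ∈ S, ∃ q ∈ S, x p = T (x q))
    (y : X)
    (hacc : ∀ U : Set X, IsOpen U → y ∈ U → {n : ℕ | x n ∈ U} ∈ E) :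
    T y = y := by
  by_contra hne
  obtain ⟨W, hWo, hyW, hdisj⟩ := hT.exists_isOpen_disjoint_image_of_ne hne
  obtain ⟨p, hp, q, hq, hpq⟩ := hfollow _ (hacc W hWo hyW)
  exact hdisj.ne_of_mem hp (mem_image_of_mem T hq) hpq

/-- If a sequence follows a continuous operator `T` with respect to an eventual family `E`
and `y` is an accumulation point of the sequence with respect to `E`, then `y` is a fixed
point of `T`. -/
theorem follows_acc_isFixedPt {X : Type*} [TopologicalSpace X] [T2Space X]
    (T : X → X) (hT : Continuous T) (E : Set (Set ℕ))
    (hev : ∀ S ∈ E, ∀ S' : Set ℕ, S ⊆ S' → S' ∈ E)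
    (x : ℕ → X)
    (hfollow : ∀ S ∈ E, ∃ p ∈ S, ∃ q ∈ S, x p = T (x q))
    (y : X)
    (hacc : ∀ U : Set X, IsOpen U → y ∈ U → {n : ℕ | x n ∈ U} ∈ E) :
    T y = y :=
  follows_acc_isFixedPt_general T hT E x hfollow y hacc
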